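/- arXiv:1710.02882 — 2 statements merged into one kernel-verified Lean document; each statement's English description precedes it below -/
import Mathlib

section
/- If for every B > 0 one has lim_{n→∞} P( √n |X̄_n − S| ≤ B ) = 0, then lim_{n→∞} P_e^{(n)} = 0. -/
/-!
On the error event `X̄ - S` and `Ȳ - (1 - 2p)S` have opposite signs, which forces
`|Ȳ - (1 - 2p)X̄| ≥ (1 - 2p)|X̄ - S|`. So either `√n |X̄ - S| ≤ B`, an event of vanishing
probability, or `∑ (Yᵢ - (1 - 2p)Xᵢ)` deviates from `0` by at least `(1 - 2p)B√n`. Given `X`, the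
terms of that sum are independent, centred, of variance `4p(1 - p)`, so by Chebyshev the second
event has probability at most `4p(1 - p) / ((1 - 2p)²B²)` for every `n`; now let `n → ∞`, then
`B → ∞`.
-/

open MeasureTheory Filter Real Finset

section ProductWeights

variable {ι α : Type*} [Fintype ι] [DecidableEq ι]

theorem sum_piFinset_prod_mul_prod (t : ι → Finset α) (w f : ι → α → ℝ) :
    ∑ y ∈ Fintype.piFinset t, (∏ k, w k (y k)) * ∏ k, f k (y k)
      = ∏ k, ∑ c ∈ t k, w k c * f k c := by
  simp_rw [← prod_mul_distrib]
  exact (prod_univ_sum t fun k c => w k c * f k c).symm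

theorem sum_piFinset_prod_mul_sq_sum {t : ι → Finset α} {w g : ι → α → ℝ}
    (hw : ∀ i, ∑ c ∈ t i, w i c = 1) (hg : ∀ i, ∑ c ∈ t i, w i c * g i c = 0) :
    ∑ y ∈ Fintype.piFinset t, (∏ k, w k (y k)) * (∑ i, g i (y i)) ^ 2
      = ∑ i, ∑ c ∈ t i, w i c * g i c ^ 2 := by
  have hcov : ∀ i j, ∑ y ∈ Fintype.piFinset t, (∏ k, w k (y k)) * (g i (y i) * g j (y j))
      = if i = j then ∑ c ∈ t i, w i c * g i c ^ 2 else 0 := by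
    intro i j
    have hsplit : ∀ y : ι → α, g i (y i) * g j (y j)
        = ∏ k, (if k = i then g i (y k) else 1) * (if k = j then g j (y k) else 1) := by
      intro y
      rw [prod_mul_distrib, Fintype.prod_ite_eq', Fintype.prod_ite_eq']
    rw [sum_congr rfl fun y _ => congrArg _ (hsplit y), sum_piFinset_prod_mul_prod t w
      fun k c => (if k = i then g i c else 1) * (if k = j then g j c else 1)]
    split_ifs with hij
    · subst hij
      rw [prod_eq_single i (fun k _ hk => by simp [hk, hw]) (by simp)]
      simp [sq]
    · exact prod_eq_zero (mem_univ i) (by simp [hij, hg])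
  calc ∑ y ∈ Fintype.piFinset t, (∏ k, w k (y k)) * (∑ i, g i (y i)) ^ 2
      = ∑ i, ∑ j, ∑ y ∈ Fintype.piFinset t, (∏ k, w k (y k)) * (g i (y i) * g j (y j)) := by
        simp_rw [sq, Finset.sum_mul_sum, mul_sum]
        rw [sum_comm]
        exact sum_congr rfl fun i _ => sum_comm
    _ = ∑ i, ∑ c ∈ t i, w i c * g i c ^ 2 := by simp [hcov]

end ProductWeights

theorem sum_filter_le_sum_mul_sq_div {β : Type*} {s : Finset β} {W Z : β → ℝ}
    (hW : ∀ y ∈ s, 0 ≤ W y) {r : ℝ} (hr : 0 < r) :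
    ∑ y ∈ s with r ≤ |Z y|, W y ≤ (∑ y ∈ s, W y * Z y ^ 2) / r ^ 2 := by
  rw [le_div_iff₀ (by positivity), sum_mul]
  calc ∑ y ∈ s with r ≤ |Z y|, W y * r ^ 2
      ≤ ∑ y ∈ s with r ≤ |Z y|, W y * Z y ^ 2 := by
        refine sum_le_sum fun y hy => ?_
        obtain ⟨hys, hry⟩ := mem_filter.1 hy
        have : r ^ 2 ≤ Z y ^ 2 := by rw [← sq_abs (Z y)]; gcongr
        exact mul_le_mul_of_nonneg_left this (hW y hys)
    _ ≤ ∑ y ∈ s, W y * Z y ^ 2 :=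
        sum_le_sum_of_subset_of_nonneg (filter_subset _ _)
          fun y hy _ => mul_nonneg (hW y hy) (sq_nonneg _)

theorem measureReal_setOf_eq_sum_sum {Ω α β : Type*} [MeasurableSpace Ω] [MeasurableSpace α]
    [MeasurableSpace β] [MeasurableSingletonClass α] [MeasurableSingletonClass β]
    (P : Measure Ω) [IsFiniteMeasure P] {X : Ω → α} {Y : Ω → β} (hX : Measurable X)
    (hY : Measurable Y) {s : Finset α} {t : Finset β} (hXs : ∀ ω, X ω ∈ s) (hYt : ∀ ω, Y ω ∈ t)
    (q : α → β → Prop) [∀ x y, Decidable (q x y)] :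
    P.real {ω | q (X ω) (Y ω)} = ∑ x ∈ s, ∑ y ∈ t with q x y, P.real {ω | X ω = x ∧ Y ω = y} := by
  have hset : {ω | q (X ω) (Y ω)}
      = (fun ω => (X ω, Y ω)) ⁻¹' ↑((s ×ˢ t).filter fun z => q z.1 z.2) := by
    ext ω; simp [hXs ω, hYt ω]
  rw [hset, ← sum_measureReal_preimage_singleton _
    fun z _ => hX.prodMk hY (measurableSet_singleton z), sum_filter, sum_product]
  refine sum_congr rfl fun x _ => ?_
  rw [sum_filter]
  refine sum_congr rfl fun y _ => ?_
  congr 2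
  ext ω; simp

theorem abs_sub_mul_ge_of_mul_neg {u v c : ℝ} (huv : u * v < 0) :
    c * |u| ≤ |v - c * u| := by
  rcases lt_or_gt_of_ne (left_ne_zero_of_mul huv.ne) with hu | hu
  · have hv : 0 < v := by nlinarith
    rw [abs_of_neg hu]
    exact le_abs.2 (Or.inl (by nlinarith))
  · have hv : v < 0 := by nlinarith
    rw [abs_of_pos hu]
    exact le_abs.2 (Or.inr (by nlinarith))

theorem mul_mul_sqrt_le_abs_sub_of_mul_neg {n sx sy S c B : ℝ} (hn : 0 < n) (hc : 0 ≤ c)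
    (herr : (sx / n - S) * (sy / n - c * S) < 0) (hfar : B ≤ √n * |sx / n - S|) :
    c * B * √n ≤ |sy - c * sx| := by
  calc c * B * √n ≤ c * (√n * |sx / n - S|) * √n := by gcongr
    _ = n * (c * |sx / n - S|) := by
        linear_combination (c * |sx / n - S|) * Real.mul_self_sqrt hn.le
    _ ≤ n * |(sy / n - c * S) - c * (sx / n - S)| := by
        gcongr; exact abs_sub_mul_ge_of_mul_neg herr
    _ = |sy - c * sx| := by
        rw [← abs_of_pos hn, ← abs_mul, abs_of_pos hn]
        congr 1
        field_simp
        ring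

theorem tendsto_zero_of_le_add_div_sq {f : ℕ → ℝ} {g : ℝ → ℕ → ℝ} {K : ℝ} (hf : ∀ n, 0 ≤ f n)
    (hg : ∀ B > 0, Tendsto (g B) atTop (nhds 0))
    (hfg : ∀ B > 0, ∀ᶠ n in atTop, f n ≤ g B n + K / B ^ 2) :
    Tendsto f atTop (nhds 0) := by
  refine tendsto_order.2 ⟨fun a ha => Eventually.of_forall fun n => ha.trans_le (hf n),
    fun ε hε => ?_⟩
  have hKB : Tendsto (fun B : ℝ => K / B ^ 2) atTop (nhds 0) :=
    tendsto_const_nhds.div_atTop (tendsto_pow_atTop two_ne_zero)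
  obtain ⟨B, hBε, hB⟩ :=
    ((hKB.eventually (gt_mem_nhds (half_pos hε))).and (eventually_gt_atTop 0)).exists
  filter_upwards [hfg B hB, (hg B hB).eventually (gt_mem_nhds (half_pos hε))] with n hfn hgn
  linarith

noncomputable def flipProb (p x y : ℝ) : ℝ := if y = x then 1 - p else p

theorem flipProb_nonneg {p : ℝ} (hp0 : 0 ≤ p) (hp1 : p ≤ 1) (x y : ℝ) : 0 ≤ flipProb p x y := by
  unfold flipProb; split_ifs <;> linarith

noncomputable def signVectors (n : ℕ) : Finset (Fin n → ℝ) := Fintype.piFinset fun _ => {1, -1}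

@[simp]
theorem mem_signVectors {n : ℕ} {x : Fin n → ℝ} : x ∈ signVectors n ↔ ∀ i, x i = 1 ∨ x i = -1 := by
  simp [signVectors]

section FlipProb

variable {p x : ℝ}

theorem sum_flipProb (hx : x = 1 ∨ x = -1) : ∑ y ∈ {1, -1}, flipProb p x y = 1 := by
  rcases hx with rfl | rfl <;> norm_num [flipProb]

theorem sum_flipProb_mul_sub (hx : x = 1 ∨ x = -1) :
    ∑ y ∈ {1, -1}, flipProb p x y * (y - (1 - 2 * p) * x) = 0 := by
  rcases hx with rfl | rfl <;> norm_num [flipProb] <;> ring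

theorem sum_flipProb_mul_sub_sq (hx : x = 1 ∨ x = -1) :
    ∑ y ∈ {1, -1}, flipProb p x y * (y - (1 - 2 * p) * x) ^ 2 = 4 * p * (1 - p) := by
  rcases hx with rfl | rfl <;> norm_num [flipProb] <;> ring

end FlipProb

section Channel

variable {Ω : Type*} [MeasurableSpace Ω] {P : Measure Ω} [IsProbabilityMeasure P] {p : ℝ} {n : ℕ}
  {X Y : Ω → Fin n → ℝ}

theorem sum_prod_flipProb_mul_sq_sum {x : Fin n → ℝ} (hx : x ∈ signVectors n) :
    ∑ y ∈ signVectors n, (∏ i, flipProb p (x i) (y i)) * (∑ i, (y i - (1 - 2 * p) * x i)) ^ 2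
      = 4 * p * (1 - p) * n := by
  rw [mem_signVectors] at hx
  rw [signVectors, sum_piFinset_prod_mul_sq_sum (w := fun i y => flipProb p (x i) y)
    (g := fun i y => y - (1 - 2 * p) * x i) (fun i => sum_flipProb (hx i))
    (fun i => sum_flipProb_mul_sub (hx i))]
  simp_rw [sum_flipProb_mul_sub_sq (hx _)]
  simp [mul_comm]

theorem measureReal_le_abs_sum_sub_le (hp0 : 0 ≤ p) (hp1 : p ≤ 1) (hX : Measurable X)
    (hY : Measurable Y) (hXval : ∀ ω i, X ω i = 1 ∨ X ω i = -1)
    (hYval : ∀ ω i, Y ω i = 1 ∨ Y ω i = -1)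
    (hjoint : ∀ x y : Fin n → ℝ, (∀ i, x i = 1 ∨ x i = -1) → (∀ i, y i = 1 ∨ y i = -1) →
      P.real {ω | X ω = x ∧ Y ω = y} = P.real {ω | X ω = x} * ∏ i, flipProb p (x i) (y i))
    {r : ℝ} (hr : 0 < r) :
    P.real {ω | r ≤ |∑ i, (Y ω i - (1 - 2 * p) * X ω i)|} ≤ 4 * p * (1 - p) * n / r ^ 2 := by
  classical
  have hK : 0 ≤ 4 * p * (1 - p) * n / r ^ 2 := by
    have : 0 ≤ 1 - p := by linarith
    positivity
  rw [measureReal_setOf_eq_sum_sum P hX hY (s := signVectors n) (t := signVectors n)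
    (by simpa using hXval) (by simpa using hYval) fun x y => r ≤ |∑ i, (y i - (1 - 2 * p) * x i)|]
  calc _ = ∑ x ∈ signVectors n, P.real {ω | X ω = x} * ∑ y ∈ signVectors n with
          r ≤ |∑ i, (y i - (1 - 2 * p) * x i)|, ∏ i, flipProb p (x i) (y i) := by
        refine sum_congr rfl fun x hx => ?_
        rw [mul_sum]
        exact sum_congr rfl fun y hy =>
          hjoint x y (mem_signVectors.1 hx) (mem_signVectors.1 (mem_filter.1 hy).1)
    _ ≤ ∑ x ∈ signVectors n, P.real {ω | X ω = x} * (4 * p * (1 - p) * n / r ^ 2) := by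
        gcongr with x hx
        rw [← sum_prod_flipProb_mul_sq_sum hx]
        exact sum_filter_le_sum_mul_sq_div
          (fun y _ => prod_nonneg fun i _ => flipProb_nonneg hp0 hp1 _ _) hr
    _ = (∑ x ∈ signVectors n, P.real (X ⁻¹' {x})) * (4 * p * (1 - p) * n / r ^ 2) :=
        (sum_mul _ _ _).symm
    _ ≤ 4 * p * (1 - p) * n / r ^ 2 := by
        rw [sum_measureReal_preimage_singleton _ fun x _ => hX (measurableSet_singleton x)]
        exact mul_le_of_le_one_left hK measureReal_le_one

theorem measureReal_error_le (hp0 : 0 ≤ p) (hp1 : p < 1 / 2) (hX : Measurable X)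
    (hY : Measurable Y) (hXval : ∀ ω i, X ω i = 1 ∨ X ω i = -1)
    (hYval : ∀ ω i, Y ω i = 1 ∨ Y ω i = -1)
    (hjoint : ∀ x y : Fin n → ℝ, (∀ i, x i = 1 ∨ x i = -1) → (∀ i, y i = 1 ∨ y i = -1) →
      P.real {ω | X ω = x ∧ Y ω = y} = P.real {ω | X ω = x} * ∏ i, flipProb p (x i) (y i))
    (hn : 0 < n) (S : ℝ) {B : ℝ} (hB : 0 < B) :
    P.real {ω | ((∑ i, X ω i) / n - S) * ((∑ i, Y ω i) / n - (1 - 2 * p) * S) < 0}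
      ≤ P.real {ω | √n * |(∑ i, X ω i) / n - S| ≤ B}
        + 4 * p * (1 - p) / (1 - 2 * p) ^ 2 / B ^ 2 := by
  have hc : 0 < 1 - 2 * p := by linarith
  have hn' : (0 : ℝ) < n := Nat.cast_pos.2 hn
  set r := (1 - 2 * p) * B * √n with hr_def
  have hr : 0 < r := by positivity
  have hsub : {ω | ((∑ i, X ω i) / n - S) * ((∑ i, Y ω i) / n - (1 - 2 * p) * S) < 0}
      ⊆ {ω | √n * |(∑ i, X ω i) / n - S| ≤ B}
        ∪ {ω | r ≤ |∑ i, (Y ω i - (1 - 2 * p) * X ω i)|} := by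
    intro ω herr
    by_cases hnear : √n * |(∑ i, X ω i) / n - S| ≤ B
    · exact Or.inl hnear
    · right
      show r ≤ |∑ i, (Y ω i - (1 - 2 * p) * X ω i)|
      rw [sum_sub_distrib, ← mul_sum]
      exact mul_mul_sqrt_le_abs_sub_of_mul_neg hn' hc.le herr (not_le.1 hnear).le
  calc _ ≤ _ := measureReal_mono hsub
    _ ≤ _ := measureReal_union_le _ _
    _ ≤ P.real {ω | √n * |(∑ i, X ω i) / n - S| ≤ B} + 4 * p * (1 - p) * n / r ^ 2 := by
        gcongr
        exact measureReal_le_abs_sum_sub_le hp0 (by linarith) hX hY hXval hYval hjoint hr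
    _ = _ := by
        rw [hr_def, mul_pow, mul_pow, Real.sq_sqrt hn'.le]
        field_simp

end Channel

theorem supermajority_error_tendsto_zero_general
    {Ω : Type*} [MeasurableSpace Ω] (P : Measure Ω) [IsProbabilityMeasure P]
    (p S : ℝ) (hp0 : 0 < p) (hp1 : p < 1 / 2)
    (X Y : (n : ℕ) → Ω → Fin n → ℝ)
    (hXval : ∀ n ω i, X n ω i = 1 ∨ X n ω i = -1)
    (hYval : ∀ n ω i, Y n ω i = 1 ∨ Y n ω i = -1)
    (hXmeas : ∀ n, Measurable (X n))
    (hYmeas : ∀ n, Measurable (Y n))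
    (hjoint : ∀ n (x y : Fin n → ℝ), (∀ i, x i = 1 ∨ x i = -1) →
      (∀ i, y i = 1 ∨ y i = -1) →
      (P {ω | X n ω = x ∧ Y n ω = y}).toReal
        = (P {ω | X n ω = x}).toReal * ∏ i, (if y i = x i then 1 - p else p))
    (hconc : ∀ B : ℝ, 0 < B →
      Tendsto (fun n : ℕ =>
        (P {ω | Real.sqrt n * |(∑ i, X n ω i) / n - S| ≤ B}).toReal) atTop (nhds 0)) :
    Tendsto (fun n : ℕ =>
        (P {ω | ((∑ i, X n ω i) / n - S) * ((∑ i, Y n ω i) / n - (1 - 2 * p) * S) < 0}).toReal)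
      atTop (nhds 0) :=
  tendsto_zero_of_le_add_div_sq (fun _ => ENNReal.toReal_nonneg) hconc fun _ hB =>
    (eventually_gt_atTop 0).mono fun n hn =>
      measureReal_error_le hp0.le hp1 (hXmeas n) (hYmeas n) (hXval n) (hYval n) (hjoint n) hn S hB

/-- In the sentiment detection model, if for every `B > 0` one has
`lim_{n→∞} P(√n |X̄_n - S| ≤ B) = 0`, then `lim_{n→∞} P_e^{(n)} = 0`. -/
theorem supermajority_error_tendsto_zero
    {Ω : Type*} [MeasurableSpace Ω] (P : Measure Ω) [IsProbabilityMeasure P]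
    (p S : ℝ) (hp0 : 0 < p) (hp1 : p < 1 / 2) (hS0 : -1 < S) (hS1 : S < 1)
    (X Y : (n : ℕ) → Ω → Fin n → ℝ)
    (hXval : ∀ n ω i, X n ω i = 1 ∨ X n ω i = -1)
    (hYval : ∀ n ω i, Y n ω i = 1 ∨ Y n ω i = -1)
    (hXmeas : ∀ n, Measurable (X n))
    (hYmeas : ∀ n, Measurable (Y n))
    (hjoint : ∀ n (x y : Fin n → ℝ), (∀ i, x i = 1 ∨ x i = -1) →
      (∀ i, y i = 1 ∨ y i = -1) →
      (P {ω | X n ω = x ∧ Y n ω = y}).toReal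
        = (P {ω | X n ω = x}).toReal * ∏ i, (if y i = x i then 1 - p else p))
    (hconc : ∀ B : ℝ, 0 < B →
      Tendsto (fun n : ℕ =>
        (P {ω | Real.sqrt n * |(∑ i, X n ω i) / n - S| ≤ B}).toReal) atTop (nhds 0)) :
    Tendsto (fun n : ℕ =>
        (P {ω | ((∑ i, X n ω i) / n - S) * ((∑ i, Y n ω i) / n - (1 - 2 * p) * S) < 0}).toReal)
      atTop (nhds 0) :=
  supermajority_error_tendsto_zero_general P p S hp0 hp1 X Y hXval hYval hXmeas hYmeas hjoint hconc
end

section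
/- If lim_{n→∞} E[X̄_n] = μ with μ ≠ S, and there exist 0 < b < |μ − S| and α_b > 0 such that limsup_{n→∞} (1/n) log P( |X̄_n − μ| ≥ b ) ≤ −α_b, then limsup_{n→∞} (1/n) log P_e^{(n)} ≤ −min{ α_b, C_p (|μ − S| − b)² }, where C_p = (1−2p)²/2. -/
/-!
On the event `|X̄ₙ - μ| < b`, the fraction `X̄ₙ` lies on the same side of `S` as `μ`, with margin
`|μ - S| - b`. An error then forces the independent flips to move `Ȳₙ` from its conditional mean
`(1 - 2p) X̄ₙ` by more than `(1 - 2p) (|μ - S| - b)`, in the direction fixed by the sign of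
`μ - S`. Hoeffding's lemma for one flip and a Chernoff bound show that this has conditional
probability at most `exp (-n C_p (|μ - S| - b)²)`, whatever `X` is. Hence
`P_e ≤ P(|X̄ₙ - μ| ≥ b) + exp (-n C_p (|μ - S| - b)²)`, and the exponential rate of a sum is
the larger of the two rates.
-/

open MeasureTheory Filter Real ProbabilityTheory
open scoped ENNReal

theorem centered_bernoulli_mgf_le {p : ℝ} (hp0 : 0 ≤ p) (hp1 : p ≤ 1) (t : ℝ) :
    (1 - p) * exp (t * -(2 * p)) + p * exp (t * (2 - 2 * p)) ≤ exp (t ^ 2 / 2) := by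
  set ν : Measure ℝ := bernoulliMeasure (2 - 2 * p) (-(2 * p)) ⟨p, hp0, hp1⟩
  have hIcc : ∀ᵐ z ∂ν, z ∈ Set.Icc (-(2 * p)) (2 - 2 * p) := by
    rw [ae_iff]
    exact bernoulliMeasure_apply_of_notMem_of_notMem _ measurableSet_Icc.compl
      (by simp) (by simp)
  have hmean : ν[id] = 0 := by
    simp only [ν, integral_bernoulliMeasure, id_eq, smul_eq_mul]
    ring
  have h := (hasSubgaussianMGF_of_mem_Icc_of_integral_eq_zero aemeasurable_id hIcc hmean).mgf_le t
  simp only [mgf, ν, integral_bernoulliMeasure, id_eq, smul_eq_mul] at h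
  convert h using 1
  · ring
  · norm_num

noncomputable def pmCube (n : ℕ) : Finset (Fin n → ℝ) := Fintype.piFinset fun _ ↦ {1, -1}

theorem mem_pmCube {n : ℕ} {x : Fin n → ℝ} : x ∈ pmCube n ↔ ∀ i, x i = 1 ∨ x i = -1 := by
  simp [pmCube]

/-- The conditional probability `P(Y = y | X = x)` in the model. -/
noncomputable def flipWeight (p : ℝ) {n : ℕ} (x y : Fin n → ℝ) : ℝ :=
  ∏ i, if y i = x i then 1 - p else p

section Flip

variable {p : ℝ} {n : ℕ}

theorem flipWeight_nonneg (hp0 : 0 ≤ p) (hp1 : p ≤ 1) (x y : Fin n → ℝ) :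
    0 ≤ flipWeight p x y :=
  Finset.prod_nonneg fun i _ ↦ by split_ifs <;> linarith

theorem sum_flip_mul_exp_le (hp0 : 0 ≤ p) (hp1 : p ≤ 1) {s : ℝ} (hs : s = 1 ∨ s = -1) (t : ℝ) :
    ∑ v ∈ ({1, -1} : Finset ℝ), (if v = s then 1 - p else p) * exp (t * ((1 - 2 * p) * s - v))
      ≤ exp (t ^ 2 / 2) := by
  have hne : (-1 : ℝ) ≠ 1 := by norm_num
  rw [Finset.sum_pair hne.symm]
  rcases hs with rfl | rfl
  · rw [if_pos rfl, if_neg hne]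
    convert centered_bernoulli_mgf_le hp0 hp1 t using 4 <;> ring
  · rw [if_neg hne.symm, if_pos rfl, add_comm, ← neg_sq t]
    convert centered_bernoulli_mgf_le hp0 hp1 (-t) using 4 <;> ring

theorem sum_flipWeight_mul_exp_le (hp0 : 0 ≤ p) (hp1 : p ≤ 1) {x : Fin n → ℝ}
    (hx : x ∈ pmCube n) (t : ℝ) :
    ∑ y ∈ pmCube n, flipWeight p x y * exp (t * ∑ i, ((1 - 2 * p) * x i - y i))
      ≤ exp (n * (t ^ 2 / 2)) := by
  rw [mem_pmCube] at hx
  calc ∑ y ∈ pmCube n, flipWeight p x y * exp (t * ∑ i, ((1 - 2 * p) * x i - y i))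
      = ∏ i, ∑ v ∈ ({1, -1} : Finset ℝ),
          (if v = x i then 1 - p else p) * exp (t * ((1 - 2 * p) * x i - v)) := by
        rw [Finset.prod_univ_sum]
        refine Finset.sum_congr rfl fun y _ ↦ ?_
        rw [flipWeight, Finset.mul_sum, exp_sum, Finset.prod_mul_distrib]
    _ ≤ ∏ _i : Fin n, exp (t ^ 2 / 2) :=
        Finset.prod_le_prod (fun i _ ↦ Finset.sum_nonneg fun v _ ↦
          mul_nonneg (by split_ifs <;> linarith) (exp_pos _).le)
          fun i _ ↦ sum_flip_mul_exp_le hp0 hp1 (hx i) t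
    _ = exp (n * (t ^ 2 / 2)) := by simp [← exp_nat_mul]

theorem sum_flipWeight_filter_le (hp0 : 0 ≤ p) (hp1 : p ≤ 1) {x : Fin n → ℝ}
    (hx : x ∈ pmCube n) (t : ℝ) :
    ∑ y ∈ pmCube n with n * t ^ 2 ≤ t * ∑ i, ((1 - 2 * p) * x i - y i), flipWeight p x y
      ≤ exp (-(n * (t ^ 2 / 2))) := by
  set D : (Fin n → ℝ) → ℝ := fun y ↦ ∑ i, ((1 - 2 * p) * x i - y i)
  calc ∑ y ∈ pmCube n with n * t ^ 2 ≤ t * D y, flipWeight p x y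
      ≤ ∑ y ∈ pmCube n with n * t ^ 2 ≤ t * D y,
          exp (-(n * t ^ 2)) * (flipWeight p x y * exp (t * D y)) := by
        refine Finset.sum_le_sum fun y hy ↦ ?_
        rw [Finset.mem_filter] at hy
        rw [mul_left_comm, ← exp_add]
        exact le_mul_of_one_le_right (flipWeight_nonneg hp0 hp1 x y)
          (one_le_exp (by linarith [hy.2]))
    _ ≤ exp (-(n * t ^ 2)) * ∑ y ∈ pmCube n, flipWeight p x y * exp (t * D y) := by
        rw [Finset.mul_sum]
        exact Finset.sum_le_sum_of_subset_of_nonneg (Finset.filter_subset _ _)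
          fun y _ _ ↦ mul_nonneg (exp_pos _).le
            (mul_nonneg (flipWeight_nonneg hp0 hp1 x y) (exp_pos _).le)
    _ ≤ exp (-(n * t ^ 2)) * exp (n * (t ^ 2 / 2)) :=
        mul_le_mul_of_nonneg_left (sum_flipWeight_mul_exp_le hp0 hp1 hx t) (exp_pos _).le
    _ = exp (-(n * (t ^ 2 / 2))) := by rw [← exp_add]; ring_nf

end Flip

theorem exists_tilt_of_sign_error {q μ S b : ℝ} (hq : 0 < q) (hb : b < |μ - S|) :
    ∃ t, t ^ 2 = (q * (|μ - S| - b)) ^ 2 ∧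
      ∀ u v, |u - μ| < b → (u - S) * (v - q * S) < 0 → t ^ 2 ≤ t * (q * u - v) := by
  have hc : 0 < q * (|μ - S| - b) := mul_pos hq (by linarith)
  rcases le_total S μ with hSμ | hμS
  · rw [abs_of_nonneg (by linarith)] at hb hc ⊢
    refine ⟨q * (μ - S - b), rfl, fun u v hu herr ↦ ?_⟩
    have hu' : μ - S - b < u - S := by linarith [neg_abs_le (u - μ)]
    have hv : v - q * S < 0 := neg_of_mul_neg_right herr (by linarith)
    rw [sq]
    exact mul_le_mul_of_nonneg_left (by nlinarith) hc.le
  · rw [abs_of_nonpos (by linarith)] at hb hc ⊢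
    refine ⟨-(q * (-(μ - S) - b)), neg_sq _, fun u v hu herr ↦ ?_⟩
    have hu' : u - S < -(-(μ - S) - b) := by linarith [le_abs_self (u - μ)]
    have hv : 0 < v - q * S := pos_of_mul_neg_right herr (by linarith)
    rw [sq]
    exact mul_le_mul_of_nonpos_left (by nlinarith) (by linarith)

theorem natCast_mul_sum_div {n : ℕ} (x : Fin n → ℝ) : (n : ℝ) * ((∑ i, x i) / n) = ∑ i, x i := by
  rcases n.eq_zero_or_pos with rfl | hn
  · simp
  · exact mul_div_cancel₀ _ (by positivity)

theorem sum_flipWeight_error_le {p μ S b : ℝ} (hp0 : 0 ≤ p) (hp1 : p < 1 / 2) {n : ℕ}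
    {x : Fin n → ℝ} (hx : x ∈ pmCube n) (hxμ : |(∑ i, x i) / n - μ| < b) (hb : b < |μ - S|) :
    ∑ y ∈ pmCube n with ((∑ i, x i) / n - S) * ((∑ i, y i) / n - (1 - 2 * p) * S) < 0,
        flipWeight p x y
      ≤ exp (-(n * ((1 - 2 * p) ^ 2 / 2 * (|μ - S| - b) ^ 2))) := by
  obtain ⟨t, ht, htilt⟩ := exists_tilt_of_sign_error (q := 1 - 2 * p) (by linarith) hb
  calc _ ≤ ∑ y ∈ pmCube n with n * t ^ 2 ≤ t * ∑ i, ((1 - 2 * p) * x i - y i),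
        flipWeight p x y := by
        refine Finset.sum_le_sum_of_subset_of_nonneg
          (Finset.monotone_filter_right _ fun y _ herr ↦ ?_)
          fun y _ _ ↦ flipWeight_nonneg hp0 (by linarith) x y
        have hD : ∑ i, ((1 - 2 * p) * x i - y i)
            = n * ((1 - 2 * p) * ((∑ i, x i) / n) - (∑ i, y i) / n) := by
          rw [mul_sub, mul_left_comm, natCast_mul_sum_div, natCast_mul_sum_div,
            Finset.sum_sub_distrib, Finset.mul_sum]
        rw [hD, mul_left_comm]
        exact mul_le_mul_of_nonneg_left (htilt _ _ hxμ herr) n.cast_nonneg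
    _ ≤ exp (-(n * (t ^ 2 / 2))) := sum_flipWeight_filter_le hp0 (by linarith) hx t
    _ = _ := by rw [ht]; ring_nf

section FiniteValued

variable {Ω α β : Type*} [MeasurableSpace Ω] [MeasurableSpace α] [MeasurableSpace β]
  [MeasurableSingletonClass α] [MeasurableSingletonClass β] (P : Measure Ω) [IsFiniteMeasure P]

theorem measureReal_setOf_eq_sum {Z : Ω → α} (hZ : Measurable Z) {s : Finset α}
    (hZs : ∀ ω, Z ω ∈ s) (Q : α → Prop) [DecidablePred Q] :
    P.real {ω | Q (Z ω)} = ∑ z ∈ s with Q z, P.real {ω | Z ω = z} := by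
  rw [show {ω | Q (Z ω)} = Z ⁻¹' ↑{z ∈ s | Q z} by ext ω; simp [hZs]]
  exact (sum_measureReal_preimage_singleton _ fun z _ ↦ hZ (measurableSet_singleton z)).symm

theorem measureReal_setOf_eq_sum_mul_sum {X : Ω → α} {Y : Ω → β} (hX : Measurable X)
    (hY : Measurable Y) {s : Finset α} {t : Finset β} (hXs : ∀ ω, X ω ∈ s) (hYt : ∀ ω, Y ω ∈ t)
    {K : α → β → ℝ}
    (hK : ∀ x ∈ s, ∀ y ∈ t, P.real {ω | X ω = x ∧ Y ω = y} = P.real {ω | X ω = x} * K x y)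
    (Q : α → β → Prop) [∀ x, DecidablePred (Q x)] :
    P.real {ω | Q (X ω) (Y ω)} = ∑ x ∈ s, P.real {ω | X ω = x} * ∑ y ∈ t with Q x y, K x y := by
  rw [measureReal_setOf_eq_sum P (hX.prodMk hY) (s := s ×ˢ t)
    (fun ω ↦ Finset.mem_product.2 ⟨hXs ω, hYt ω⟩) fun z ↦ Q z.1 z.2,
    Finset.sum_filter, Finset.sum_product]
  refine Finset.sum_congr rfl fun x hx ↦ ?_
  rw [Finset.sum_filter, Finset.mul_sum]
  refine Finset.sum_congr rfl fun y hy ↦ ?_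
  simp only [Prod.mk.injEq, mul_ite, mul_zero, hK x hx y hy]

end FiniteValued

section Model

variable {Ω : Type*} [MeasurableSpace Ω] (P : Measure Ω) [IsProbabilityMeasure P] {p S μ b : ℝ}
  {n : ℕ} {X Y : Ω → Fin n → ℝ}

theorem measureReal_close_and_error_le (hp0 : 0 ≤ p) (hp1 : p < 1 / 2) (hb : b < |μ - S|)
    (hX : Measurable X) (hY : Measurable Y) (hXs : ∀ ω, X ω ∈ pmCube n)
    (hYs : ∀ ω, Y ω ∈ pmCube n)
    (hjoint : ∀ x ∈ pmCube n, ∀ y ∈ pmCube n,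
      P.real {ω | X ω = x ∧ Y ω = y} = P.real {ω | X ω = x} * flipWeight p x y) :
    P.real {ω | |(∑ i, X ω i) / n - μ| < b ∧
        ((∑ i, X ω i) / n - S) * ((∑ i, Y ω i) / n - (1 - 2 * p) * S) < 0}
      ≤ exp (-(n * ((1 - 2 * p) ^ 2 / 2 * (|μ - S| - b) ^ 2))) := by
  set r := exp (-(n * ((1 - 2 * p) ^ 2 / 2 * (|μ - S| - b) ^ 2)))
  have hsum_one : ∑ x ∈ pmCube n, P.real {ω | X ω = x} = 1 := by
    simpa using (measureReal_setOf_eq_sum P hX hXs fun _ ↦ True).symm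
  rw [measureReal_setOf_eq_sum_mul_sum P hX hY hXs hYs hjoint fun x y ↦
    |(∑ i, x i) / n - μ| < b ∧ ((∑ i, x i) / n - S) * ((∑ i, y i) / n - (1 - 2 * p) * S) < 0]
  calc _ ≤ ∑ x ∈ pmCube n, P.real {ω | X ω = x} * r := by
        refine Finset.sum_le_sum fun x hx ↦ mul_le_mul_of_nonneg_left ?_ measureReal_nonneg
        by_cases hxμ : |(∑ i, x i) / n - μ| < b
        · simpa only [hxμ, true_and] using sum_flipWeight_error_le hp0 hp1 hx hxμ hb
        · simp only [hxμ, false_and, Finset.filter_false, Finset.sum_empty]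
          positivity
    _ = r := by rw [← Finset.sum_mul, hsum_one, one_mul]

theorem measure_error_le_add_exp (hp0 : 0 ≤ p) (hp1 : p < 1 / 2) (hb : b < |μ - S|)
    (hX : Measurable X) (hY : Measurable Y) (hXs : ∀ ω, X ω ∈ pmCube n)
    (hYs : ∀ ω, Y ω ∈ pmCube n)
    (hjoint : ∀ x ∈ pmCube n, ∀ y ∈ pmCube n,
      P.real {ω | X ω = x ∧ Y ω = y} = P.real {ω | X ω = x} * flipWeight p x y) :
    P {ω | ((∑ i, X ω i) / n - S) * ((∑ i, Y ω i) / n - (1 - 2 * p) * S) < 0}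
      ≤ P {ω | b ≤ |(∑ i, X ω i) / n - μ|}
        + ENNReal.ofReal (exp (-(n * ((1 - 2 * p) ^ 2 / 2 * (|μ - S| - b) ^ 2)))) := by
  calc _ ≤ P ({ω | b ≤ |(∑ i, X ω i) / n - μ|} ∪ {ω | |(∑ i, X ω i) / n - μ| < b ∧
          ((∑ i, X ω i) / n - S) * ((∑ i, Y ω i) / n - (1 - 2 * p) * S) < 0}) :=
        measure_mono fun ω herr ↦ (le_or_gt b _).imp id (⟨·, herr⟩)
    _ ≤ _ := by
        refine (measure_union_le _ _).trans (add_le_add_right ?_ _)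
        rw [← ofReal_measureReal (measure_ne_top _ _)]
        exact ENNReal.ofReal_le_ofReal
          (measureReal_close_and_error_le P hp0 hp1 hb hX hY hXs hYs hjoint)

end Model

noncomputable def expRate (a : ℕ → ℝ≥0∞) : EReal :=
  limsup (fun n : ℕ ↦ (((n : ℝ)⁻¹ : ℝ) : EReal) * ENNReal.log (a n)) atTop

theorem expRate_mono {a b : ℕ → ℝ≥0∞} (h : a ≤ᶠ[atTop] b) : expRate a ≤ expRate b :=
  limsup_le_limsup (h.mono fun n hn ↦ mul_le_mul_of_nonneg_left (ENNReal.log_monotone hn)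
    (EReal.coe_nonneg.2 (inv_nonneg.2 n.cast_nonneg)))

theorem inv_mul_log_add_le (n : ℕ) (x y : ℝ≥0∞) :
    (((n : ℝ)⁻¹ : ℝ) : EReal) * ENNReal.log (x + y)
      ≤ (((n : ℝ)⁻¹ * Real.log 2 : ℝ) : EReal) + max ((((n : ℝ)⁻¹ : ℝ) : EReal) * ENNReal.log x)
        ((((n : ℝ)⁻¹ : ℝ) : EReal) * ENNReal.log y) := by
  set c : EReal := (((n : ℝ)⁻¹ : ℝ) : EReal)
  have hc : 0 ≤ c := EReal.coe_nonneg.2 (inv_nonneg.2 n.cast_nonneg)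
  have hmul : Monotone (c * ·) := fun _ _ h ↦ mul_le_mul_of_nonneg_left h hc
  have hlog : ENNReal.log (x + y) ≤ Real.log 2 + max (ENNReal.log x) (ENNReal.log y) := by
    calc ENNReal.log (x + y) ≤ ENNReal.log (2 * max x y) :=
          ENNReal.log_monotone (two_mul (max x y) ▸ add_le_add (le_max_left _ _) (le_max_right _ _))
      _ = _ := by
          rw [ENNReal.log_mul_add, ENNReal.log_monotone.map_max,
            ← ENNReal.ofReal_ofNat, ENNReal.log_ofReal_of_pos two_pos]
  calc c * ENNReal.log (x + y) ≤ c * (Real.log 2 + max (ENNReal.log x) (ENNReal.log y)) :=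
        hmul hlog
    _ = _ := by
        rw [EReal.left_distrib_of_nonneg_of_ne_top hc (EReal.coe_ne_top _), hmul.map_max,
          ← EReal.coe_mul]

theorem expRate_add_le (a b : ℕ → ℝ≥0∞) : expRate (a + b) ≤ max (expRate a) (expRate b) := by
  have hlog2 : Tendsto (fun n : ℕ ↦ (((n : ℝ)⁻¹ * Real.log 2 : ℝ) : EReal)) atTop (nhds 0) := by
    rw [← EReal.coe_zero, EReal.tendsto_coe]
    simpa using tendsto_inv_atTop_nhds_zero_nat.mul_const (Real.log 2)
  calc expRate (a + b)
      ≤ limsup ((fun n : ℕ ↦ (((n : ℝ)⁻¹ * Real.log 2 : ℝ) : EReal)) + fun n : ℕ ↦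
          max ((((n : ℝ)⁻¹ : ℝ) : EReal) * ENNReal.log (a n))
            ((((n : ℝ)⁻¹ : ℝ) : EReal) * ENNReal.log (b n))) atTop :=
        limsup_le_limsup (.of_forall fun n ↦ inv_mul_log_add_le n _ _)
    _ ≤ 0 + max (expRate a) (expRate b) := by
        refine (EReal.limsup_add_le ?_ ?_).trans_eq ?_ <;> rw [hlog2.limsup_eq]
        · exact .inl EReal.zero_ne_bot
        · exact .inl EReal.zero_ne_top
        · rw [limsup_max]; rfl
    _ = max (expRate a) (expRate b) := zero_add _

theorem expRate_ofReal_exp (β : ℝ) :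
    expRate (fun n ↦ ENNReal.ofReal (exp (-(n * β)))) = ((-β : ℝ) : EReal) := by
  refine (limsup_congr ((eventually_ne_atTop 0).mono fun n hn ↦ ?_)).trans (limsup_const _)
  rw [ENNReal.log_ofReal_of_pos (exp_pos _), Real.log_exp, ← EReal.coe_mul, mul_neg,
    inv_mul_cancel_left₀ (Nat.cast_ne_zero.2 hn)]

theorem supermajority_error_exponential_decay_of_mean_general
    {Ω : Type*} [MeasurableSpace Ω] (P : Measure Ω) [IsProbabilityMeasure P]
    (p S : ℝ) (hp0 : 0 < p) (hp1 : p < 1 / 2)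
    (X Y : (n : ℕ) → Ω → Fin n → ℝ)
    (hXval : ∀ n ω i, X n ω i = 1 ∨ X n ω i = -1)
    (hYval : ∀ n ω i, Y n ω i = 1 ∨ Y n ω i = -1)
    (hXmeas : ∀ n, Measurable (X n))
    (hYmeas : ∀ n, Measurable (Y n))
    (hjoint : ∀ n (x y : Fin n → ℝ), (∀ i, x i = 1 ∨ x i = -1) →
      (∀ i, y i = 1 ∨ y i = -1) →
      (P {ω | X n ω = x ∧ Y n ω = y}).toReal
        = (P {ω | X n ω = x}).toReal * ∏ i, (if y i = x i then 1 - p else p))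
    (μ : ℝ)
    (b αb : ℝ) (hbμ : b < |μ - S|)
    (hdev : limsup (fun n : ℕ =>
        (((n : ℝ)⁻¹ : ℝ) : EReal) * ENNReal.log (P {ω | b ≤ |(∑ i, X n ω i) / n - μ|}))
        atTop ≤ ((-αb : ℝ) : EReal)) :
    limsup (fun n : ℕ =>
        (((n : ℝ)⁻¹ : ℝ) : EReal) * ENNReal.log
          (P {ω | ((∑ i, X n ω i) / n - S) * ((∑ i, Y n ω i) / n - (1 - 2 * p) * S) < 0}))
      atTop ≤ ((-(min αb ((1 - 2 * p) ^ 2 / 2 * (|μ - S| - b) ^ 2)) : ℝ) : EReal) := by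
  set β := (1 - 2 * p) ^ 2 / 2 * (|μ - S| - b) ^ 2
  have hsplit := fun n ↦ measure_error_le_add_exp P hp0.le hp1 hbμ (hXmeas n) (hYmeas n)
    (fun ω ↦ mem_pmCube.2 (hXval n ω)) (fun ω ↦ mem_pmCube.2 (hYval n ω))
    fun x hx y hy ↦ hjoint n x y (mem_pmCube.1 hx) (mem_pmCube.1 hy)
  calc expRate (fun n ↦
        P {ω | ((∑ i, X n ω i) / n - S) * ((∑ i, Y n ω i) / n - (1 - 2 * p) * S) < 0})
      ≤ expRate ((fun n ↦ P {ω | b ≤ |(∑ i, X n ω i) / n - μ|})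
          + fun n : ℕ ↦ ENNReal.ofReal (exp (-(n * β)))) := expRate_mono (.of_forall hsplit)
    _ ≤ max ((-αb : ℝ) : EReal) ((-β : ℝ) : EReal) :=
        (expRate_add_le _ _).trans (max_le_max hdev (expRate_ofReal_exp β).le)
    _ = ((-(min αb β) : ℝ) : EReal) := by
        rw [← EReal.coe_strictMono.monotone.map_max, max_neg_neg]

/-- In the sentiment detection model, if `lim_{n→∞} E[X̄_n] = μ ≠ S`, and
there exist `0 < b < |μ - S|` and `α_b > 0` such that
`limsup_{n→∞} (1/n) log P(|X̄_n - μ| ≥ b) ≤ -α_b`, then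
`limsup_{n→∞} (1/n) log P_e^{(n)} ≤ -min{α_b, C_p (|μ - S| - b)²}` with `C_p = (1-2p)²/2`
(logarithms of probabilities are taken in the extended reals, so `log 0 = -∞`). -/
theorem supermajority_error_exponential_decay_of_mean
    {Ω : Type*} [MeasurableSpace Ω] (P : Measure Ω) [IsProbabilityMeasure P]
    (p S : ℝ) (hp0 : 0 < p) (hp1 : p < 1 / 2) (hS0 : -1 < S) (hS1 : S < 1)
    (X Y : (n : ℕ) → Ω → Fin n → ℝ)
    (hXval : ∀ n ω i, X n ω i = 1 ∨ X n ω i = -1)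
    (hYval : ∀ n ω i, Y n ω i = 1 ∨ Y n ω i = -1)
    (hXmeas : ∀ n, Measurable (X n))
    (hYmeas : ∀ n, Measurable (Y n))
    (hjoint : ∀ n (x y : Fin n → ℝ), (∀ i, x i = 1 ∨ x i = -1) →
      (∀ i, y i = 1 ∨ y i = -1) →
      (P {ω | X n ω = x ∧ Y n ω = y}).toReal
        = (P {ω | X n ω = x}).toReal * ∏ i, (if y i = x i then 1 - p else p))
    (μ : ℝ) (hμS : μ ≠ S)
    (hmean : Tendsto (fun n : ℕ => ∫ ω, (∑ i, X n ω i) / n ∂P) atTop (nhds μ))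
    (b αb : ℝ) (hb : 0 < b) (hbμ : b < |μ - S|) (hαb : 0 < αb)
    (hdev : limsup (fun n : ℕ =>
        (((n : ℝ)⁻¹ : ℝ) : EReal) * ENNReal.log (P {ω | b ≤ |(∑ i, X n ω i) / n - μ|}))
        atTop ≤ ((-αb : ℝ) : EReal)) :
    limsup (fun n : ℕ =>
        (((n : ℝ)⁻¹ : ℝ) : EReal) * ENNReal.log
          (P {ω | ((∑ i, X n ω i) / n - S) * ((∑ i, Y n ω i) / n - (1 - 2 * p) * S) < 0}))
      atTop ≤ ((-(min αb ((1 - 2 * p) ^ 2 / 2 * (|μ - S| - b) ^ 2)) : ℝ) : EReal) :=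
  supermajority_error_exponential_decay_of_mean_general P p S hp0 hp1 X Y hXval hYval hXmeas hYmeas
    hjoint μ b αb hbμ hdev
end
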